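/- arXiv:2001.07356 — 2 statements merged into one kernel-verified Lean document; each statement's English description precedes it below -/
import Mathlib

section
/- For y > 0, the function y ↦ y·H'(y)/H(y) is monotone decreasing, where H(x) = tanh(x/√2). -/
noncomputable def H : ℝ → ℝ := fun x => Real.tanh (x / Real.sqrt 2)

/-!
With `u = y / √2` one has `H' y = 1 / (√2 cosh² u)`, so
`y H'(y) / H(y) = u / (sinh u cosh u) = s / sinh s` for `s = √2 y`. Finally `s ↦ s / sinh s`
decreases on `(0, ∞)` because its derivative has the sign of `sinh s - s cosh s < 0`.
-/

open Real Set

theorem Real.hasDerivAt_tanh (x : ℝ) : HasDerivAt tanh (1 / cosh x ^ 2) x := by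
  have h := (hasDerivAt_sinh x).div (hasDerivAt_cosh x) (cosh_pos x).ne'
  rw [show tanh = sinh / cosh from funext tanh_eq_sinh_div_cosh]
  refine h.congr_deriv ?_
  rw [← cosh_sq_sub_sinh_sq x]
  ring

theorem hasDerivAt_H (y : ℝ) : HasDerivAt H (1 / (√2 * cosh (y / √2) ^ 2)) y := by
  have h := (hasDerivAt_tanh (y / √2)).comp y ((hasDerivAt_id' y).div_const √2)
  refine h.congr_deriv ?_
  ring

theorem Real.sinh_lt_mul_cosh {x : ℝ} (hx : 0 < x) : sinh x < x * cosh x := by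
  have hmono : StrictMonoOn (fun t => t * cosh t - sinh t) (Ici 0) := by
    refine strictMonoOn_of_deriv_pos (convex_Ici 0) (by fun_prop) fun t ht => ?_
    rw [interior_Ici, mem_Ioi] at ht
    have hd : HasDerivAt (fun t => t * cosh t - sinh t) _ t :=
      ((hasDerivAt_id' t).mul (hasDerivAt_cosh t)).sub (hasDerivAt_sinh t)
    rw [hd.deriv]
    simpa using mul_pos ht (sinh_pos_iff.2 ht)
  simpa using hmono self_mem_Ici hx.le hx

theorem Real.strictAntiOn_div_sinh : StrictAntiOn (fun s => s / sinh s) (Ioi 0) := by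
  refine strictAntiOn_of_deriv_neg (convex_Ioi 0)
    (continuousOn_id.div continuous_sinh.continuousOn fun s hs => (sinh_pos_iff.2 hs).ne')
    fun s hs => ?_
  rw [interior_Ioi, mem_Ioi] at hs
  have hd : HasDerivAt (fun s => s / sinh s) _ s :=
    (hasDerivAt_id' s).div (hasDerivAt_sinh s) (sinh_pos_iff.2 hs).ne'
  rw [hd.deriv]
  exact div_neg_of_neg_of_pos (by linarith [sinh_lt_mul_cosh hs]) (by positivity)

theorem mul_deriv_H_div_H :
    (fun y => y * deriv H y / H y) = fun y => √2 * y / sinh (√2 * y) := by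
  ext y
  have hu : √2 * y = 2 * (y / √2) := by
    field_simp
    rw [sq_sqrt zero_le_two, mul_comm]
  have hc := (cosh_pos (y / √2)).ne'
  rw [(hasDerivAt_H y).deriv, H, tanh_eq_sinh_div_cosh, hu, sinh_two_mul]
  field_simp

/-- For `y > 0`, the function `y ↦ y·H'(y)/H(y)` is monotone decreasing, where
`H(x) = tanh(x/√2)`. -/
theorem stmt_3 : StrictAntiOn (fun y : ℝ => y * deriv H y / H y) (Set.Ioi 0) := by
  rw [mul_deriv_H_div_H]
  have h2 : (0 : ℝ) < √2 := by positivity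
  exact strictAntiOn_div_sinh.comp_strictMonoOn ((strictMono_mul_left_of_pos h2).strictMonoOn _)
    fun y hy => mul_pos h2 hy
end

section
/- The function u*(y,z) = H(y)H(z), with H(x) = tanh(x/√2), satisfies the supersolution inequality -∂²_y u* - ∂²_z u* - (6/(y²-z²))(y ∂_y u* - z ∂_z u*) - u* + (u*)³ ≥ 0 in the region {(y,z) : y > z > 0}. -/
/-!
Since `H'' = H³ - H`, the reaction part `-H''(y)H(z) - H(y)H''(z) - u* + u*³` equals
`H(y)H(z)(1 - H(y)²)(1 - H(z)²) ≥ 0`, so it suffices that the drift term `y ∂_y u* - z ∂_z u*`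
is nonpositive. Via `(1 - tanh² x) sinh 2x = 2 tanh x` this is the monotonicity of `sinh t / t`
on `(0, ∞)`, i.e. of the slope through the origin of the convex function `sinh`.
-/

open Real Set

namespace Real

lemma tanh_pos {x : ℝ} (hx : 0 < x) : 0 < tanh x := by
  rw [tanh_eq_sinh_div_cosh]
  exact div_pos (sinh_pos_iff.mpr hx) (cosh_pos x)

lemma hasDerivAt_tanh_s5 (x : ℝ) : HasDerivAt tanh (1 - tanh x ^ 2) x := by
  have h := (hasDerivAt_sinh x).div (hasDerivAt_cosh x) (cosh_pos x).ne'
  rw [show sinh / cosh = tanh from funext fun y ↦ (tanh_eq_sinh_div_cosh y).symm] at h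
  refine h.congr_deriv ?_
  rw [tanh_eq_sinh_div_cosh]
  field_simp

lemma one_sub_tanh_sq_mul_sinh_two_mul (x : ℝ) :
    (1 - tanh x ^ 2) * sinh (2 * x) = 2 * tanh x := by
  have hc := (cosh_pos x).ne'
  rw [tanh_eq_sinh_div_cosh, sinh_two_mul]
  field_simp
  rw [cosh_sq_sub_sinh_sq, mul_one]

lemma convexOn_sinh : ConvexOn ℝ (Ici 0) sinh := by
  refine MonotoneOn.convexOn_of_deriv (convex_Ici 0) continuous_sinh.continuousOn
    differentiable_sinh.differentiableOn ?_
  rw [deriv_sinh, interior_Ici]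
  intro a ha b hb hab
  exact cosh_le_cosh.mpr (by rwa [abs_of_pos ha, abs_of_pos hb])

lemma mul_sinh_le_mul_sinh {y z : ℝ} (hz : 0 < z) (hzy : z ≤ y) : y * sinh z ≤ z * sinh y := by
  have hy := hz.trans_le hzy
  have h := convexOn_sinh.secant_mono (a := 0) self_mem_Ici hz.le hy.le hz.ne' hy.ne' hzy
  simp only [sinh_zero, sub_zero] at h
  rwa [div_le_div_iff₀ hz hy, mul_comm (sinh z), mul_comm (sinh y)] at h

lemma mul_one_sub_tanh_sq_mul_tanh_le {y z : ℝ} (hz : 0 < z) (hzy : z ≤ y) :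
    y * (1 - tanh y ^ 2) * tanh z ≤ z * (1 - tanh z ^ 2) * tanh y := by
  have hy := hz.trans_le hzy
  have hsinh := mul_sinh_le_mul_sinh (by positivity : 0 < 2 * z) (by linarith : 2 * z ≤ 2 * y)
  have hsy : 0 < sinh (2 * y) := sinh_pos_iff.mpr (by positivity)
  have hsz : 0 < sinh (2 * z) := sinh_pos_iff.mpr (by positivity)
  have htt : 0 < tanh y * tanh z := mul_pos (tanh_pos hy) (tanh_pos hz)
  refine le_of_mul_le_mul_right ?_ (mul_pos hsy hsz)
  calc y * (1 - tanh y ^ 2) * tanh z * (sinh (2 * y) * sinh (2 * z))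
      = tanh y * tanh z * (2 * y * sinh (2 * z)) := by
        linear_combination y * tanh z * sinh (2 * z) * one_sub_tanh_sq_mul_sinh_two_mul y
    _ ≤ tanh y * tanh z * (2 * z * sinh (2 * y)) := by gcongr
    _ = z * (1 - tanh z ^ 2) * tanh y * (sinh (2 * y) * sinh (2 * z)) := by
        linear_combination -z * tanh y * sinh (2 * y) * one_sub_tanh_sq_mul_sinh_two_mul z

end Real

lemma hasDerivAt_H_s5 (x : ℝ) : HasDerivAt H ((1 - H x ^ 2) / √2) x := by
  have h := (hasDerivAt_tanh_s5 (x / √2)).comp x ((hasDerivAt_id x).div_const √2)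
  refine h.congr_deriv ?_
  simp only [H]
  ring

lemma deriv_H : deriv H = fun x ↦ (1 - H x ^ 2) / √2 :=
  funext fun x ↦ (hasDerivAt_H_s5 x).deriv

lemma deriv_deriv_H (x : ℝ) : deriv (deriv H) x = H x ^ 3 - H x := by
  have h := (((hasDerivAt_H_s5 x).fun_pow 2).const_sub 1).div_const √2
  rw [deriv_H, h.deriv]
  have h2 : √2 ^ 2 = 2 := sq_sqrt zero_le_two
  field_simp
  linear_combination (H x - H x ^ 3) * h2

lemma H_pos {x : ℝ} (hx : 0 < x) : 0 < H x := tanh_pos (by positivity)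

lemma H_sq_lt_one (x : ℝ) : H x ^ 2 < 1 := tanh_sq_lt_one _

lemma mul_deriv_H_mul_H_sub_nonpos {y z : ℝ} (hz : 0 < z) (hzy : z ≤ y) :
    y * (deriv H y * H z) - z * (H y * deriv H z) ≤ 0 := by
  have h := mul_one_sub_tanh_sq_mul_tanh_le (by positivity : 0 < z / √2)
    (div_le_div_of_nonneg_right hzy (sqrt_nonneg 2))
  simp only [deriv_H, H]
  linear_combination h

/-- `u*(y,z) = H(y)H(z)` satisfies the supersolution inequality
`-∂²_y u* - ∂²_z u* - (6/(y²-z²))(y ∂_y u* - z ∂_z u*) - u* + (u*)³ ≥ 0`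
in the region `{y > z > 0}`. -/
theorem stmt_5 : ∀ y z : ℝ, z < y → 0 < z →
    -(deriv (deriv H) y * H z) - (H y * deriv (deriv H) z)
      - (6 / (y ^ 2 - z ^ 2)) * (y * (deriv H y * H z) - z * (H y * deriv H z))
      - H y * H z + (H y * H z) ^ 3 ≥ 0 := by
  intro y z hzy hz
  have hy := hz.trans hzy
  have hdrift : 6 / (y ^ 2 - z ^ 2) * (y * (deriv H y * H z) - z * (H y * deriv H z)) ≤ 0 :=
    mul_nonpos_of_nonneg_of_nonpos (div_nonneg (by norm_num) (by nlinarith))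
      (mul_deriv_H_mul_H_sub_nonpos hz hzy.le)
  have hreaction : 0 ≤ H y * H z * (1 - H y ^ 2) * (1 - H z ^ 2) :=
    mul_nonneg (mul_nonneg (mul_pos (H_pos hy) (H_pos hz)).le
      (sub_nonneg.mpr (H_sq_lt_one y).le)) (sub_nonneg.mpr (H_sq_lt_one z).le)
  rw [deriv_deriv_H, deriv_deriv_H]
  linear_combination hreaction + hdrift
end
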